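/- arXiv:2512.14638 — 8 statements merged into one kernel-verified Lean document; each statement's English description precedes it below -/
import Mathlib

section
/- For integers n and t with n ≥ t ≥ 1, the number h_n(t) of t-chains in the Boolean lattice B_n satisfies h_n(t) = Σ_{i=0}^{t−1} (−1)^{t−i+1} · binom(t−1, i) · (i+2)^n (an equality of integers). -/
/-!
A chain `C₀ ⊂ ⋯ ⊂ C_{t-1}` of subsets of `[n]` is determined by the function sending `x` to the
index of the first `Cⱼ` containing `x` (or to `t` if there is none), since `Cⱼ` is the set of
points of index at most `j`. Conversely, a function `[n] → {0, …, t}` defines in this way a chain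
of `t` distinct sets exactly when it takes each of the values `1, …, t - 1`. Inclusion–exclusion
over the set of values missed counts these functions as `∑ₘ (-1)ᵐ C(t-1, m) (t+1-m)ⁿ`, which is the
stated formula after substituting `m = t - 1 - i`.
-/

/-- The set of `t`-chains in the Boolean lattice `B_n`: families of `t`
pairwise comparable (under inclusion) subsets of `[n]`. -/
def boolChains (n t : ℕ) : Finset (Finset (Finset (Fin n))) :=
  Finset.univ.filter (fun C => C.card = t ∧ ∀ A ∈ C, ∀ B ∈ C, A ⊆ B ∨ B ⊆ A)

open Finset

theorem card_filter_subset_image_univ {α β : Type*} [Fintype α] [DecidableEq α] [Fintype β]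
    [DecidableEq β] (S : Finset β) :
    (#{f : α → β | S ⊆ univ.image f} : ℤ) =
      ∑ m ∈ range (#S + 1),
        ((#S).choose m : ℤ) * ((-1) ^ m * ((Fintype.card β - m : ℕ) : ℤ) ^ Fintype.card α) := by
  have hinf : (S.inf fun b => ({f : α → β | ∀ a, f a ≠ b} : Finset _)ᶜ) =
      ({f : α → β | S ⊆ univ.image f} : Finset _) := by
    ext f
    simp [mem_inf, subset_iff]
  have hmissing (U : Finset β) :
      #(U.inf fun b => ({f : α → β | ∀ a, f a ≠ b} : Finset _)) =
        (Fintype.card β - #U) ^ Fintype.card α := by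
    have : (U.inf fun b => ({f : α → β | ∀ a, f a ≠ b} : Finset _)) =
        Fintype.piFinset fun _ => Uᶜ := by
      ext f
      simp only [mem_inf, mem_filter_univ, Fintype.mem_piFinset, mem_compl]
      exact ⟨fun h a ha => h _ ha a rfl, fun h b hb a hab => h a (hab ▸ hb)⟩
    rw [this, Fintype.card_piFinset, prod_const, card_univ, card_compl]
  simp_rw [← hinf, inclusion_exclusion_card_inf_compl, hmissing, Nat.cast_pow]
  rw [sum_powerset_apply_card fun m =>
    (-1 : ℤ) ^ m * ((Fintype.card β - m : ℕ) : ℤ) ^ Fintype.card α]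
  simp only [nsmul_eq_mul]

namespace BoolChains

variable {α : Type*}

section Chain

variable [DecidableEq α] {C : Finset (Finset α)}

/-- The index of the first member of `C` containing `x`, when `C` is a chain listed increasingly
from `0`; it is `#C` if no member of `C` contains `x`. -/
def entryIndex (C : Finset (Finset α)) (x : α) : ℕ := #{A ∈ C | x ∉ A}

def height (C : Finset (Finset α)) (A : Finset α) : ℕ := #{B ∈ C | B ⊂ A}

theorem entryIndex_le_card (C : Finset (Finset α)) (x : α) : entryIndex C x ≤ #C :=
  card_filter_le _ _

theorem height_lt_card {A : Finset α} (hA : A ∈ C) : height C A < #C :=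
  card_lt_card (filter_ssubset.2 ⟨A, hA, ssubset_irrefl A⟩)

theorem mem_iff_entryIndex_le_height (hC : IsChain (· ⊆ ·) (C : Set (Finset α)))
    {A : Finset α} (hA : A ∈ C) (x : α) : x ∈ A ↔ entryIndex C x ≤ height C A := by
  constructor
  · intro hx
    refine card_le_card fun B hB => ?_
    rw [mem_filter] at hB ⊢
    refine ⟨hB.1, ?_⟩
    rcases hC.total (mem_coe.2 hB.1) (mem_coe.2 hA) with hBA | hAB
    · exact ssubset_of_subset_of_ne hBA (by rintro rfl; exact hB.2 hx)
    · exact absurd (hAB hx) hB.2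
  · intro hle
    by_contra hx
    have hsub : {B ∈ C | B ⊂ A} ⊆ {B ∈ C | x ∉ B} := fun B hB => by
      rw [mem_filter] at hB ⊢
      exact ⟨hB.1, fun hxB => hx (hB.2.subset hxB)⟩
    have hlt : height C A < entryIndex C x := card_lt_card <| (ssubset_iff_of_subset hsub).2
      ⟨A, mem_filter.2 ⟨hA, hx⟩, fun h => ssubset_irrefl A (mem_filter.1 h).2⟩
    omega

end Chain

section Levels

variable [Fintype α] {g : α → ℕ} {t : ℕ}

def levelSet (g : α → ℕ) (j : ℕ) : Finset α := {x | g x ≤ j}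

theorem levelSet_mono (g : α → ℕ) : Monotone (levelSet g) := fun j j' h x => by
  simp only [levelSet, mem_filter_univ]
  omega

theorem injOn_levelSet_iff :
    Set.InjOn (levelSet g) (range t) ↔ ∀ j ∈ Ioo 0 t, ∃ x, g x = j := by
  constructor
  · intro hinj j hj
    rw [mem_Ioo] at hj
    by_contra! hmissing
    have hsame : levelSet g (j - 1) = levelSet g j := by
      ext x
      have := hmissing x
      simp only [levelSet, mem_filter_univ]
      omega
    have := hinj (by simp; omega) (by simp; omega) hsame
    omega
  · intro hhit
    refine StrictMonoOn.injOn fun j _ j' hj' hjj' => ?_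
    rw [coe_range, Set.mem_Iio] at hj'
    obtain ⟨x, hx⟩ := hhit (j + 1) (mem_Ioo.2 ⟨by omega, by omega⟩)
    refine (ssubset_iff_of_subset (levelSet_mono g hjj'.le)).2 ⟨x, ?_, ?_⟩ <;>
      simp only [levelSet, mem_filter_univ] <;> omega

variable [DecidableEq α]

def levelChain (g : α → ℕ) (t : ℕ) : Finset (Finset α) := (range t).image (levelSet g)

theorem isChain_levelChain (g : α → ℕ) (t : ℕ) :
    IsChain (· ⊆ ·) (levelChain g t : Set (Finset α)) := by
  rw [levelChain, coe_image]
  exact (levelSet_mono g).isChain_range.mono (Set.image_subset_range _ _)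

theorem card_levelChain_eq_iff : #(levelChain g t) = t ↔ ∀ j ∈ Ioo 0 t, ∃ x, g x = j := by
  rw [levelChain, ← injOn_levelSet_iff, ← card_image_iff, card_range]

theorem entryIndex_levelChain (hinj : Set.InjOn (levelSet g) (range t)) {x : α} (hx : g x ≤ t) :
    entryIndex (levelChain g t) x = g x := by
  have hmissing : {j ∈ range t | x ∉ levelSet g j} = range (g x) := by
    ext j
    simp only [mem_filter, mem_range, levelSet, mem_univ, true_and]
    omega
  rw [entryIndex, levelChain, filter_image,
    card_image_of_injOn (hinj.mono (coe_subset.2 (filter_subset _ _))), hmissing,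
    card_range]

theorem levelSet_entryIndex_height {C : Finset (Finset α)}
    (hC : IsChain (· ⊆ ·) (C : Set (Finset α))) {A : Finset α} (hA : A ∈ C) :
    levelSet (entryIndex C) (height C A) = A := by
  ext x
  simp [levelSet, mem_iff_entryIndex_le_height hC hA]

theorem levelChain_entryIndex {C : Finset (Finset α)}
    (hC : IsChain (· ⊆ ·) (C : Set (Finset α))) : levelChain (entryIndex C) #C = C := by
  have hsub : C ⊆ levelChain (entryIndex C) #C := fun A hA =>
    mem_image.2 ⟨height C A, mem_range.2 (height_lt_card hA), levelSet_entryIndex_height hC hA⟩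
  exact (eq_of_subset_of_card_le hsub (card_image_le.trans (card_range _).le)).symm

end Levels

end BoolChains

open BoolChains

theorem mem_boolChains {n t : ℕ} {C : Finset (Finset (Fin n))} :
    C ∈ boolChains n t ↔ #C = t ∧ IsChain (· ⊆ ·) (C : Set (Finset (Fin n))) := by
  rw [boolChains, mem_filter_univ]
  exact and_congr_right fun _ =>
    ⟨fun h A hA B hB _ => h A hA B hB, fun h A hA B hB => h.total hA hB⟩

theorem Ioo_last_subset_image_iff {α : Type*} [Fintype α] {t : ℕ} {f : α → Fin (t + 1)} :
    Ioo 0 (Fin.last t) ⊆ univ.image f ↔ ∀ j ∈ Ioo 0 t, ∃ x, (f x : ℕ) = j := by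
  simp only [subset_iff, mem_image, mem_univ, true_and, mem_Ioo]
  constructor
  · intro h j hj
    obtain ⟨x, hx⟩ := @h ⟨j, by omega⟩ (by rw [Fin.lt_def, Fin.lt_def]; exact hj)
    exact ⟨x, by rw [hx]⟩
  · intro h j hj
    rw [Fin.lt_def, Fin.lt_def, Fin.val_zero, Fin.val_last] at hj
    obtain ⟨x, hx⟩ := h j hj
    exact ⟨x, Fin.ext hx⟩

theorem card_boolChains (n t : ℕ) :
    #(boolChains n t) = #{f : Fin n → Fin (t + 1) | Ioo 0 (Fin.last t) ⊆ univ.image f} := by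
  refine card_bij'
    (fun C hC x => ⟨entryIndex C x,
      Nat.lt_succ_of_le ((mem_boolChains.1 hC).1 ▸ entryIndex_le_card C x)⟩)
    (fun f _ => levelChain (fun x => (f x : ℕ)) t) ?_ ?_ ?_ ?_
  · intro C hC
    obtain ⟨rfl, hchain⟩ := mem_boolChains.1 hC
    rw [mem_filter_univ, Ioo_last_subset_image_iff]
    exact card_levelChain_eq_iff.1 (congrArg card (levelChain_entryIndex hchain))
  · intro f hf
    rw [mem_filter_univ, Ioo_last_subset_image_iff] at hf
    exact mem_boolChains.2 ⟨card_levelChain_eq_iff.2 hf, isChain_levelChain _ _⟩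
  · intro C hC
    obtain ⟨rfl, hchain⟩ := mem_boolChains.1 hC
    exact levelChain_entryIndex hchain
  · intro f hf
    rw [mem_filter_univ, Ioo_last_subset_image_iff] at hf
    funext x
    exact Fin.ext (entryIndex_levelChain (injOn_levelSet_iff.2 hf) (Fin.is_le _))

theorem stmt0_general (n t : ℕ) (ht : 1 ≤ t) :
    ((boolChains n t).card : ℤ) =
      ∑ i ∈ Finset.range t,
        (-1 : ℤ) ^ (t - i + 1) * (Nat.choose (t - 1) i) * ((i : ℤ) + 2) ^ n := by
  have hvalues : #(Ioo (0 : Fin (t + 1)) (Fin.last t)) = t - 1 := by simp [Fin.card_Ioo]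
  rw [card_boolChains, card_filter_subset_image_univ, hvalues, Nat.sub_add_cancel ht,
    Fintype.card_fin, Fintype.card_fin, ← sum_range_reflect]
  refine sum_congr rfl fun i hi => ?_
  rw [mem_range] at hi
  rw [Nat.choose_symm (by omega), show t + 1 - (t - 1 - i) = i + 2 by omega,
    show t - i + 1 = t - 1 - i + 2 by omega, pow_add, neg_one_sq]
  push_cast
  ring

theorem stmt0 (n t : ℕ) (ht : 1 ≤ t) (hnt : t ≤ n) :
    ((boolChains n t).card : ℤ) =
      ∑ i ∈ Finset.range t,
        (-1 : ℤ) ^ (t - i + 1) * (Nat.choose (t - 1) i) * ((i : ℤ) + 2) ^ n :=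
  stmt0_general n t ht
end

section
/- Let k ≥ 1 and N ≥ 1 be integers, let P be a finite poset, and let 𝓠 be a family of subsets of [N]. If k · L_N(P; 𝓠) < N + 1 − lu_N(𝓠), then every k-coloring of B_N contains a monochromatic copy of P, i.e., for every function χ from the subsets of [N] to {1,…,k} there exist a color c and an injection f from P to subsets of [N] such that f(x) ⊆ f(y) whenever x ≤ y in P and χ(f(x)) = c for every x in P. -/
/-!
If no colour class contained a copy of `P`, then the colour classes restricted to the complement
of `𝓠` would be `P`-free families disjoint from `𝓠`, each of Lubell mass at most `L`. They
partition `B_N \ 𝓠`, whose Lubell mass is `N + 1 - lu(𝓠)` because every level of `B_N` has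
mass `1`; hence `N + 1 - lu(𝓠) ≤ k L`.
-/

/-- The Lubell function of a family of subsets of `[N]`. -/
def lubell (N : ℕ) (F : Finset (Finset (Fin N))) : ℚ :=
  ∑ A ∈ F, (1 : ℚ) / (N.choose A.card)

open Finset

theorem lubell_univ (N : ℕ) : lubell N univ = N + 1 := by
  rw [lubell, ← powerset_univ, sum_powerset_apply_card fun m => (1 : ℚ) / N.choose m]
  have level : ∀ m ∈ range (N + 1), N.choose m • ((1 : ℚ) / N.choose m) = 1 := fun m hm => by
    have : (N.choose m : ℚ) ≠ 0 := by
      exact_mod_cast (Nat.choose_pos (Nat.lt_succ_iff.mp (mem_range.mp hm))).ne'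
    rw [nsmul_eq_mul, mul_one_div_cancel this]
  simp only [card_univ, Fintype.card_fin]
  rw [sum_congr rfl level]
  simp

theorem lubell_sdiff_add_lubell {N : ℕ} (Q : Finset (Finset (Fin N))) :
    lubell N (univ \ Q) + lubell N Q = N + 1 :=
  (sum_sdiff (subset_univ Q)).trans (lubell_univ N)

theorem sum_lubell_filter_eq {N : ℕ} {ι : Type*} [Fintype ι] [DecidableEq ι]
    (χ : Finset (Fin N) → ι) (G : Finset (Finset (Fin N))) :
    ∑ c, lubell N (G.filter (χ · = c)) = lubell N G :=
  sum_fiberwise G χ _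

theorem stmt1_general (k N : ℕ)
    (P : Type) [PartialOrder P]
    (Q : Finset (Finset (Fin N))) (L : ℚ)
    (hL : IsGreatest {x : ℚ | ∃ F : Finset (Finset (Fin N)),
        Disjoint F Q ∧
        (¬ ∃ f : P → Finset (Fin N), Function.Injective f ∧
            (∀ a, f a ∈ F) ∧ ∀ a b : P, a ≤ b → f a ⊆ f b) ∧
        lubell N F = x} L)
    (hlt : (k : ℚ) * L < (N : ℚ) + 1 - lubell N Q) :
    ∀ χ : Finset (Fin N) → Fin k, ∃ (c : Fin k) (f : P → Finset (Fin N)),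
      Function.Injective f ∧ (∀ a b : P, a ≤ b → f a ⊆ f b) ∧ ∀ a, χ (f a) = c := by
  intro χ
  by_contra hχ
  have class_le : ∀ c, lubell N ((univ \ Q).filter (χ · = c)) ≤ L := fun c =>
    hL.2 ⟨_, disjoint_sdiff_self_left.mono_left (filter_subset _ _),
      fun ⟨f, hf, hmem, hmono⟩ => hχ ⟨c, f, hf, hmono, fun a => (mem_filter.1 (hmem a)).2⟩, rfl⟩
  have : (N : ℚ) + 1 - lubell N Q ≤ k * L :=
    calc (N : ℚ) + 1 - lubell N Q = ∑ c, lubell N ((univ \ Q).filter (χ · = c)) := by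
          rw [sum_lubell_filter_eq, ← lubell_sdiff_add_lubell Q]; ring
      _ ≤ ∑ _c : Fin k, L := sum_le_sum fun c _ => class_le c
      _ = k * L := by simp
  linarith

theorem stmt1 (k N : ℕ) (hk : 1 ≤ k) (hN : 1 ≤ N)
    (P : Type) [Fintype P] [PartialOrder P]
    (Q : Finset (Finset (Fin N))) (L : ℚ)
    (hL : IsGreatest {x : ℚ | ∃ F : Finset (Finset (Fin N)),
        Disjoint F Q ∧
        (¬ ∃ f : P → Finset (Fin N), Function.Injective f ∧
            (∀ a, f a ∈ F) ∧ ∀ a b : P, a ≤ b → f a ⊆ f b) ∧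
        lubell N F = x} L)
    (hlt : (k : ℚ) * L < (N : ℚ) + 1 - lubell N Q) :
    ∀ χ : Finset (Fin N) → Fin k, ∃ (c : Fin k) (f : P → Finset (Fin N)),
      Function.Injective f ∧ (∀ a b : P, a ≤ b → f a ⊆ f b) ∧ ∀ a, χ (f a) = c :=
  stmt1_general k N P Q L hL hlt
end

section
/- For every integer N ≥ 5, the maximum of lu_N(𝓕) over all M_2-free families 𝓕 of subsets of [N] with ∅ ∉ 𝓕 and [N] ∉ 𝓕 equals 1 + 1/N. -/
/-- The family `G` of subsets of `[N]` contains a copy of the matching `M_s`: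
there are `2s` pairwise distinct members `A_1, …, A_s, B_1, …, B_s` of `G`
with `A_i ⊆ B_i` for each `i`. -/
def ContainsMatching (N s : ℕ) (G : Finset (Finset (Fin N))) : Prop :=
  ∃ f : Fin s ⊕ Fin s → Finset (Fin N), Function.Injective f ∧
    (∀ x, f x ∈ G) ∧ ∀ i : Fin s, f (Sum.inl i) ⊆ f (Sum.inr i)

open Finset

namespace Nat

theorem choose_le_choose_of_le_of_le_half {n j k : ℕ} (hjk : j ≤ k) (hk : k ≤ n / 2) :
    n.choose j ≤ n.choose k := by
  induction k, hjk using Nat.le_induction with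
  | base => rfl
  | succ k _ ih => exact (ih (by omega)).trans (choose_le_succ_of_lt_half_left (by omega))

theorem choose_le_choose_of_le_of_add_le {n j k : ℕ} (hjk : j ≤ k) (hkj : k + j ≤ n) :
    n.choose j ≤ n.choose k := by
  rcases le_or_gt k (n / 2) with hk | hk
  · exact choose_le_choose_of_le_of_le_half hjk hk
  · rw [← choose_symm (show k ≤ n by omega)]
    exact choose_le_choose_of_le_of_le_half (by omega) (by omega)

theorem two_mul_choose_le_choose_add_two (n k : ℕ) :
    2 * n.choose k ≤ (n + 2).choose (k + 1) := by
  rw [choose_succ_succ', choose_succ_succ']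
  have := choose_le_choose k (le_add_right n 1)
  omega

end Nat

theorem Finset.exists_ssubset_of_not_isAntichain {α : Type*} {𝒜 : Finset (Finset α)}
    (h𝒜 : ¬IsAntichain (· ⊆ ·) (𝒜 : Set (Finset α))) : ∃ A ∈ 𝒜, ∃ B ∈ 𝒜, A ⊂ B := by
  by_contra! h
  exact h𝒜 fun A hA B hB hne hAB => h A hA B hB (ssubset_of_subset_of_ne hAB hne)

theorem Finset.sum_inv_choose_le_one_of_forall_subset {α 𝕜 : Type*} [DecidableEq α]
    [Semifield 𝕜] [LinearOrder 𝕜] [IsStrictOrderedRing 𝕜] {𝒜 : Finset (Finset α)}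
    {s : Finset α} (h𝒜 : IsAntichain (· ⊆ ·) (𝒜 : Set (Finset α))) (hs : ∀ A ∈ 𝒜, A ⊆ s) :
    ∑ A ∈ 𝒜, ((#s).choose #A : 𝕜)⁻¹ ≤ 1 := by
  set φ : Finset s ↪o Finset α := mapEmbedding (Function.Embedding.subtype _)
  set ℬ : Finset (Finset s) := {B | φ B ∈ 𝒜}
  have h𝒜ℬ : 𝒜 = ℬ.map φ.toEmbedding := by
    ext A
    rw [mem_map]
    refine ⟨fun hA => ⟨A.subtype (· ∈ s), ?_⟩, ?_⟩
    · have hφ : φ (A.subtype (· ∈ s)) = A := subtype_map_of_mem (hs A hA)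
      simpa [ℬ, hφ] using hA
    · rintro ⟨B, hB, rfl⟩
      simpa [ℬ] using hB
  have hℬ : IsAntichain (· ⊆ ·) (ℬ : Set (Finset s)) := by
    rw [h𝒜ℬ, coe_map] at h𝒜
    exact (IsAntichain.image_embedding_iff (φ := φ)).1 h𝒜
  simpa [h𝒜ℬ, φ] using lubell_yamamoto_meshalkin_inequality_sum_inv_choose (𝕜 := 𝕜) hℬ

section Lubell

variable {N : ℕ} {F G : Finset (Finset (Fin N))} {A : Finset (Fin N)}

theorem lubell_eq_add_lubell_erase (hA : A ∈ F) :
    lubell N F = 1 / (N.choose #A : ℚ) + lubell N (F.erase A) :=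
  (add_sum_erase F _ hA).symm

theorem lubell_le_one_of_isAntichain (hF : IsAntichain (· ⊆ ·) (F : Set (Finset (Fin N)))) :
    lubell N F ≤ 1 := by
  simpa [lubell] using lubell_yamamoto_meshalkin_inequality_sum_inv_choose (𝕜 := ℚ) hF

theorem one_div_choose_le_one_div {k : ℕ} (hk : 1 ≤ k) (hkN : k + 1 ≤ N) :
    1 / (N.choose k : ℚ) ≤ 1 / N := by
  gcongr
  · exact_mod_cast (show 0 < N by omega)
  · simpa using Nat.choose_le_choose_of_le_of_add_le hk hkN

theorem one_div_choose_le_two_div {k : ℕ} (hk : 2 ≤ k) (hkN : k + 2 ≤ N) :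
    1 / (N.choose k : ℚ) ≤ 2 / (N * (N - 1)) := by
  have h2 : 0 < N.choose 2 := Nat.choose_pos (by omega)
  calc 1 / (N.choose k : ℚ) ≤ 1 / (N.choose 2 : ℚ) := by
        gcongr
        exact Nat.choose_le_choose_of_le_of_add_le hk hkN
    _ = 2 / (N * (N - 1)) := by rw [Nat.cast_choose_two, one_div_div]

/-- Sets containing `y` and avoiding `x` form a copy of `B_{N-2}` via `D ↦ D \ {y}`, and
`binom(N, k) ≥ 2 binom(N-2, k-1)`, so LYM in that copy gives the bound `1/2`. -/
theorem lubell_le_half_of_forall_mem_not_mem {x y : Fin N} (hxy : x ≠ y)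
    (hG : IsAntichain (· ⊆ ·) (G : Set (Finset (Fin N)))) (hxyG : ∀ D ∈ G, y ∈ D ∧ x ∉ D) :
    lubell N G ≤ 1 / 2 := by
  set s : Finset (Fin N) := {x, y}ᶜ
  have hs : #s = N - 2 := by
    rw [card_compl, card_pair hxy, Fintype.card_fin]
  have hinsert : ∀ D ∈ G, insert y (D.erase y) = D := fun D hD => insert_erase (hxyG D hD).1
  have herase : Set.InjOn (fun D : Finset (Fin N) => D.erase y) G := fun D hD D' hD' h => by
    rw [← hinsert D hD, ← hinsert D' hD']
    exact congrArg (insert y) h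
  have hanti : IsAntichain (· ⊆ ·) (G.image (·.erase y) : Set (Finset (Fin N))) := by
    rw [coe_image]
    rintro _ ⟨D, hD, rfl⟩ _ ⟨D', hD', rfl⟩ hne hDD'
    refine hG hD hD' (fun h => hne (h ▸ rfl)) ?_
    rw [← hinsert D hD, ← hinsert D' hD']
    exact insert_subset_insert y hDD'
  have hsub : ∀ A ∈ G.image (·.erase y), A ⊆ s := by
    simp only [mem_image, forall_exists_index, and_imp, forall_apply_eq_imp_iff₂]
    intro D hD i hi
    simp only [s, mem_compl, mem_insert, mem_singleton, not_or]
    exact ⟨fun h => (hxyG D hD).2 (h ▸ mem_of_mem_erase hi), ne_of_mem_erase hi⟩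
  have hLYM := sum_inv_choose_le_one_of_forall_subset (𝕜 := ℚ) hanti hsub
  rw [sum_image herase, hs] at hLYM
  have hN : 2 ≤ N := by simpa [card_pair hxy] using card_le_univ ({x, y} : Finset (Fin N))
  have hterm : ∀ D ∈ G,
      1 / (N.choose #D : ℚ) ≤ 1 / 2 * ((N - 2).choose #(D.erase y) : ℚ)⁻¹ := by
    intro D hD
    have hle : #(D.erase y) ≤ N - 2 := hs ▸ card_le_card (hsub _ (mem_image_of_mem _ hD))
    have hchoose := Nat.two_mul_choose_le_choose_add_two (N - 2) #(D.erase y)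
    rw [Nat.sub_add_cancel hN, card_erase_add_one (hxyG D hD).1] at hchoose
    have hpos : 0 < (N - 2).choose #(D.erase y) := Nat.choose_pos hle
    calc 1 / (N.choose #D : ℚ) ≤ 1 / (2 * (N - 2).choose #(D.erase y) : ℚ) := by
          gcongr
          exact_mod_cast hchoose
      _ = 1 / 2 * ((N - 2).choose #(D.erase y) : ℚ)⁻¹ := by ring
  calc lubell N G ≤ ∑ D ∈ G, 1 / 2 * ((N - 2).choose #(D.erase y) : ℚ)⁻¹ := sum_le_sum hterm
    _ = 1 / 2 * ∑ D ∈ G, ((N - 2).choose #(D.erase y) : ℚ)⁻¹ := (mul_sum _ _ _).symm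
    _ ≤ 1 / 2 := mul_le_of_le_one_right (by norm_num) hLYM

end Lubell

section Matching

variable {N : ℕ} {F : Finset (Finset (Fin N))} {A B C D : Finset (Fin N)}

theorem containsMatching_two_of_ssubset (hA : A ∈ F) (hB : B ∈ F) (hC : C ∈ F) (hD : D ∈ F)
    (hAB : A ⊂ B) (hCD : C ⊂ D) (hCA : C ≠ A) (hCB : C ≠ B) (hDA : D ≠ A) (hDB : D ≠ B) :
    ContainsMatching N 2 F := by
  refine ⟨Sum.elim ![A, C] ![B, D], ?_, ?_, ?_⟩
  · have := hAB.ne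
    have := hCD.ne
    rintro (i | i) (j | j) h <;> fin_cases i <;> fin_cases j <;> simp_all
  · rintro (i | i) <;> fin_cases i <;> assumption
  · intro i
    fin_cases i
    exacts [hAB.subset, hCD.subset]

theorem eq_or_eq_of_ssubset_of_ssubset (hM : ¬ContainsMatching N 2 F) (hA : A ∈ F) (hB : B ∈ F)
    (hC : C ∈ F) (hD : D ∈ F) (hAB : A ⊂ B) (hCD : C ⊂ D) :
    C = A ∨ C = B ∨ D = A ∨ D = B := by
  by_contra! h
  exact hM (containsMatching_two_of_ssubset hA hB hC hD hAB hCD h.1 h.2.1 h.2.2.1 h.2.2.2)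

theorem isAntichain_erase_erase (hM : ¬ContainsMatching N 2 F) (hA : A ∈ F) (hB : B ∈ F)
    (hAB : A ⊂ B) : IsAntichain (· ⊆ ·) ((F.erase A).erase B : Set (Finset (Fin N))) := by
  intro C hC D hD hne hCD
  simp only [coe_erase, Set.mem_sdiff, mem_coe, Set.mem_singleton_iff] at hC hD
  rcases eq_or_eq_of_ssubset_of_ssubset hM hA hB hC.1.1 hD.1.1 hAB
    (ssubset_of_subset_of_ne hCD hne) with h | h | h | h
  exacts [hC.1.2 h, hC.2 h, hD.1.2 h, hD.2 h]

theorem exists_isAntichain_erase_or_exists_ssubset_ssubset (hM : ¬ContainsMatching N 2 F)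
    (hF : ¬IsAntichain (· ⊆ ·) (F : Set (Finset (Fin N)))) :
    (∃ A ∈ F, IsAntichain (· ⊆ ·) (F.erase A : Set (Finset (Fin N)))) ∨
      ∃ P ∈ F, ∃ Q ∈ F, ∃ R ∈ F, P ⊂ Q ∧ Q ⊂ R := by
  obtain ⟨A, hA, B, hB, hAB⟩ := exists_ssubset_of_not_isAntichain hF
  by_cases hA' : IsAntichain (· ⊆ ·) (F.erase A : Set (Finset (Fin N)))
  · exact Or.inl ⟨A, hA, hA'⟩
  by_cases hB' : IsAntichain (· ⊆ ·) (F.erase B : Set (Finset (Fin N)))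
  · exact Or.inl ⟨B, hB, hB'⟩
  right
  obtain ⟨C, hC, D, hD, hCD⟩ := exists_ssubset_of_not_isAntichain hA'
  obtain ⟨C', hC', D', hD', hCD'⟩ := exists_ssubset_of_not_isAntichain hB'
  rw [mem_erase] at hC hD hC' hD'
  rcases eq_or_eq_of_ssubset_of_ssubset hM hA hB hC.2 hD.2 hAB hCD with h | rfl | h | rfl
  · exact absurd h hC.1
  · exact ⟨A, hA, C, hB, D, hD.2, hAB, hCD⟩
  · exact absurd h hD.1
  rcases eq_or_eq_of_ssubset_of_ssubset hM hA hD.2 hC'.2 hD'.2 hAB hCD' with rfl | h | rfl | rfl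
  · rcases eq_or_eq_of_ssubset_of_ssubset hM hC.2 hD.2 hC'.2 hD'.2 hCD hCD' with h | h | rfl | h
    · exact absurd h.symm hC.1
    · exact absurd h hAB.ne
    · exact ⟨C', hC'.2, D', hC.2, D, hD.2, hCD', hCD⟩
    · exact absurd h hD'.1
  · exact absurd h hC'.1
  · rcases eq_or_eq_of_ssubset_of_ssubset hM hC.2 hD.2 hC'.2 hD'.2 hCD hCD' with rfl | h | h | h
    · exact ⟨C', hC'.2, D', hA, D, hD.2, hCD', hAB⟩
    · exact absurd h hC'.1
    · exact absurd h.symm hC.1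
    · exact absurd h hAB.ne
  · exact absurd rfl hD'.1

end Matching

section UpperBound

variable {N : ℕ} {F : Finset (Finset (Fin N))} {P Q R : Finset (Fin N)}

theorem lubell_le_of_ssubset_of_two_le_card (hN : 5 ≤ N) (hM : ¬ContainsMatching N 2 F)
    (hP : P ∈ F) (hQ : Q ∈ F) (hPQ : P ⊂ Q) (hP2 : 2 ≤ #P) (hQ2 : #Q + 2 ≤ N) :
    lubell N F ≤ 1 + 1 / N := by
  have hPQcard := card_lt_card hPQ
  rw [lubell_eq_add_lubell_erase hP, lubell_eq_add_lubell_erase (mem_erase.2 ⟨hPQ.ne', hQ⟩)]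
  have hrest := lubell_le_one_of_isAntichain (isAntichain_erase_erase hM hP hQ hPQ)
  have hPterm := one_div_choose_le_two_div (N := N) hP2 (by omega)
  have hQterm := one_div_choose_le_two_div (N := N) (by omega) hQ2
  have hN' : (5 : ℚ) ≤ N := by exact_mod_cast hN
  have : 2 / (N * (N - 1) : ℚ) + 2 / (N * (N - 1)) ≤ 1 / N := by
    rw [← add_div, div_le_div_iff₀ (by nlinarith) (by linarith)]
    nlinarith
  linarith

theorem lubell_le_of_singleton_ssubset_ssubset_compl_singleton (hN : 4 ≤ N)
    (hM : ¬ContainsMatching N 2 F) (hP : P ∈ F) (hQ : Q ∈ F) (hR : R ∈ F)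
    (hPQ : P ⊂ Q) (hQR : Q ⊂ R) (hPx : #P = 1) (hRy : #R + 1 = N) :
    lubell N F ≤ 1 + 1 / N := by
  obtain ⟨x, rfl⟩ := card_eq_one.1 hPx
  obtain ⟨y, hy⟩ := card_eq_one.1 (show #Rᶜ = 1 by rw [card_compl, Fintype.card_fin]; omega)
  rw [← compl_eq_comm] at hy
  subst hy
  have hxy : x ≠ y := fun h =>
    (mem_compl.1 ((hPQ.trans hQR).subset (mem_singleton_self x))) (mem_singleton.2 h)
  have hQ' : Q ∈ F.erase {x} := mem_erase.2 ⟨hPQ.ne', hQ⟩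
  have hR' : {y}ᶜ ∈ (F.erase {x}).erase Q :=
    mem_erase.2 ⟨hQR.ne', mem_erase.2 ⟨(hPQ.trans hQR).ne', hR⟩⟩
  rw [lubell_eq_add_lubell_erase hP, lubell_eq_add_lubell_erase hQ',
    lubell_eq_add_lubell_erase hR']
  set G := ((F.erase {x}).erase Q).erase {y}ᶜ
  have hG : IsAntichain (· ⊆ ·) (G : Set (Finset (Fin N))) :=
    (isAntichain_erase_erase hM hP hQ hPQ).subset (coe_subset.2 (erase_subset _ _))
  have hxyG : ∀ D ∈ G, y ∈ D ∧ x ∉ D := by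
    intro D hD
    simp only [G, mem_erase] at hD
    obtain ⟨hDR, hDQ, hDP, hD⟩ := hD
    constructor
    · by_contra hyD
      have hDR' : D ⊂ {y}ᶜ := ssubset_of_subset_of_ne (subset_compl_singleton.2 hyD) hDR
      rcases eq_or_eq_of_ssubset_of_ssubset hM hP hQ hD hR hPQ hDR' with h | h | h | h
      exacts [hDP h, hDQ h, (hPQ.trans hQR).ne' h, hQR.ne' h]
    · intro hxD
      have hPD : {x} ⊂ D := ssubset_of_subset_of_ne (singleton_subset_iff.2 hxD) (Ne.symm hDP)
      rcases eq_or_eq_of_ssubset_of_ssubset hM hQ hR hP hD hQR hPD with h | h | h | h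
      exacts [hPQ.ne h, (hPQ.trans hQR).ne h, hDQ h, hDR h]
  have hQterm := one_div_choose_le_one_div (N := N) (k := #Q)
    (by have := card_lt_card hPQ; rw [card_singleton] at this; omega)
    (by have := card_lt_card hQR; omega)
  have hGterm := lubell_le_half_of_forall_mem_not_mem hxy hG hxyG
  have hN' : 1 / (N : ℚ) ≤ 1 / 4 := by
    gcongr
    exact_mod_cast hN
  rw [card_singleton, Nat.choose_symm_of_eq_add hRy.symm, Nat.choose_one_right]
  linarith

theorem lubell_le_of_ssubset_ssubset (hN : 5 ≤ N) (hM : ¬ContainsMatching N 2 F)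
    (hcard : ∀ A ∈ F, 1 ≤ #A ∧ #A + 1 ≤ N) (hP : P ∈ F) (hQ : Q ∈ F) (hR : R ∈ F)
    (hPQ : P ⊂ Q) (hQR : Q ⊂ R) :
    lubell N F ≤ 1 + 1 / N := by
  have hPQ' := card_lt_card hPQ
  have hQR' := card_lt_card hQR
  have hP1 := (hcard P hP).1
  have hRN := (hcard R hR).2
  by_cases hP2 : 2 ≤ #P
  · exact lubell_le_of_ssubset_of_two_le_card hN hM hP hQ hPQ hP2 (by omega)
  by_cases hR2 : #R + 2 ≤ N
  · exact lubell_le_of_ssubset_of_two_le_card hN hM hQ hR hQR (by omega) hR2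
  exact lubell_le_of_singleton_ssubset_ssubset_compl_singleton (by omega) hM hP hQ hR hPQ hQR
    (by omega) (by omega)

theorem lubell_le_one_add_one_div (hN : 5 ≤ N) (hempty : ∅ ∉ F) (huniv : univ ∉ F)
    (hM : ¬ContainsMatching N 2 F) : lubell N F ≤ 1 + 1 / N := by
  have hcard : ∀ A ∈ F, 1 ≤ #A ∧ #A + 1 ≤ N := fun A hA =>
    ⟨card_pos.2 (nonempty_iff_ne_empty.2 (ne_of_mem_of_not_mem hA hempty)),
      by simpa using (card_lt_iff_ne_univ A).2 (ne_of_mem_of_not_mem hA huniv)⟩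
  by_cases hF : IsAntichain (· ⊆ ·) (F : Set (Finset (Fin N)))
  · have : (0 : ℚ) ≤ 1 / N := by positivity
    linarith [lubell_le_one_of_isAntichain hF]
  rcases exists_isAntichain_erase_or_exists_ssubset_ssubset hM hF with
    ⟨A, hA, hA'⟩ | ⟨P, hP, Q, hQ, R, hR, hPQ, hQR⟩
  · rw [lubell_eq_add_lubell_erase hA]
    linarith [one_div_choose_le_one_div (hcard A hA).1 (hcard A hA).2,
      lubell_le_one_of_isAntichain hA']
  · exact lubell_le_of_ssubset_ssubset hN hM hcard hP hQ hR hPQ hQR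

end UpperBound

theorem exists_lubell_eq_one_add_one_div {N : ℕ} (hN : 3 ≤ N) (x : Fin N) :
    ∃ F : Finset (Finset (Fin N)), ∅ ∉ F ∧ univ ∉ F ∧ ¬ContainsMatching N 2 F ∧
      lubell N F = 1 + 1 / N := by
  have hcompl : #({x}ᶜ : Finset (Fin N)) + 1 = N := by
    rw [card_compl, card_singleton, Fintype.card_fin]
    omega
  have hne : ∀ i : Fin N, {x}ᶜ ≠ ({i} : Finset (Fin N)) := fun i h => by
    have := congrArg card h
    rw [card_singleton] at this
    omega
  set S : Finset (Finset (Fin N)) := univ.map ⟨singleton, singleton_injective⟩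
  have hS : ∀ A, A ∈ S ↔ ∃ i, A = {i} := by simp [S, eq_comm]
  have hF : ∀ A, A ∈ insert {x}ᶜ S ↔ A = {x}ᶜ ∨ ∃ i, A = {i} := by simp [hS]
  have hnonempty : ∀ A ∈ insert {x}ᶜ S, A.Nonempty := by
    intro A hA
    rcases (hF A).1 hA with rfl | ⟨i, rfl⟩
    · exact card_pos.1 (by omega)
    · exact singleton_nonempty i
  have htop : ∀ A ∈ insert {x}ᶜ S, ∀ B ∈ insert {x}ᶜ S, A ⊂ B → B = {x}ᶜ := by
    intro A hA B hB hAB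
    rcases (hF B).1 hB with rfl | ⟨i, rfl⟩
    · rfl
    · exact absurd (ssubset_singleton_iff.1 hAB) (hnonempty A hA).ne_empty
  refine ⟨insert {x}ᶜ S, fun h => not_nonempty_empty (hnonempty ∅ h), ?_, ?_, ?_⟩
  · intro h
    rcases (hF univ).1 h with h | ⟨i, h⟩ <;> have := congrArg card h
    · rw [card_univ, Fintype.card_fin] at this
      omega
    · rw [card_univ, Fintype.card_fin, card_singleton] at this
      omega
  · rintro ⟨f, hf, hmem, hsub⟩
    have hi : ∀ i, f (.inr i) = {x}ᶜ := fun i =>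
      htop _ (hmem _) _ (hmem _) (ssubset_of_subset_of_ne (hsub i) (hf.ne (by simp)))
    exact absurd (hf ((hi 0).trans (hi 1).symm)) (by simp)
  · rw [lubell, sum_insert (by simpa [hS] using hne), sum_map]
    simp only [Function.Embedding.coeFn_mk, card_singleton, Nat.choose_one_right, sum_const,
      card_univ, Fintype.card_fin, nsmul_eq_mul, Nat.choose_symm_of_eq_add hcompl.symm]
    field_simp
    ring

theorem stmt2 (N : ℕ) (hN : 5 ≤ N) :
    IsGreatest {x : ℚ | ∃ F : Finset (Finset (Fin N)),
        ∅ ∉ F ∧ Finset.univ ∉ F ∧ ¬ ContainsMatching N 2 F ∧ lubell N F = x}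
      (1 + 1 / (N : ℚ)) := by
  refine ⟨exists_lubell_eq_one_add_one_div (by omega) ⟨0, by omega⟩, ?_⟩
  rintro _ ⟨F, hempty, huniv, hM, rfl⟩
  exact lubell_le_one_add_one_div hN hempty huniv hM
end

section
/- For every integer k ≥ 2, the number k+2 is the least positive integer N with the following property: for every function χ from the subsets of [N] to {1,…,k} there exist four pairwise distinct subsets A_1, B_1, A_2, B_2 of [N], all with the same χ-value, such that A_1 ⊆ B_1 and A_2 ⊆ B_2. (That is, the weak Boolean Ramsey number R_k(𝓑 | M_2) equals k+2.) -/
/-!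
Upper bound: in `Fin (n + 1)` the cyclic intervals of lengths `1, …, n` starting at a point `s` form
a chain of `n` sets, and intervals of these lengths determine their starting point. With fewer than
`n` colours each of the `n + 1` chains contains a monochromatic pair `A ⊂ B`, and two of these pairs
get the same colour by pigeonhole again.

Lower bound: for `N ≤ k + 1` colour `A` by its size, merging the sizes `0, 1` into the first colour
and the sizes `≥ k` into the last. Every other colour class is an antichain, a strict inclusion in
the first class starts at `∅`, and one in the last class ends at the whole set, so two such
inclusions always share a set.
-/

open Finset Function

variable {α κ : Type*}

def HasMonochromaticM2 (χ : Finset α → κ) : Prop :=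
  ∃ A₁ B₁ A₂ B₂ : Finset α,
    A₁ ≠ B₁ ∧ A₁ ≠ A₂ ∧ A₁ ≠ B₂ ∧ B₁ ≠ A₂ ∧ B₁ ≠ B₂ ∧ A₂ ≠ B₂ ∧
    χ B₁ = χ A₁ ∧ χ A₂ = χ A₁ ∧ χ B₂ = χ A₁ ∧ A₁ ⊆ B₁ ∧ A₂ ⊆ B₂

lemma Fintype.exists_lt_map_eq_of_card_lt {ι : Type*} [LinearOrder ι] [Fintype ι] [Fintype κ]
    (f : ι → κ) (h : Fintype.card κ < Fintype.card ι) : ∃ a b, a < b ∧ f a = f b := by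
  obtain ⟨a, b, hab, hf⟩ := Fintype.exists_ne_map_eq_of_card_lt f h
  rcases hab.lt_or_gt with hab | hab
  · exact ⟨a, b, hab, hf⟩
  · exact ⟨b, a, hab, hf.symm⟩

section CyclicInterval

variable {n : ℕ}

def cyclicInterval (s : Fin (n + 1)) (t : ℕ) : Finset (Fin (n + 1)) :=
  {x | (x - s : Fin (n + 1)).val < t}

lemma mem_cyclicInterval {s x : Fin (n + 1)} {t : ℕ} :
    x ∈ cyclicInterval s t ↔ (x - s : Fin (n + 1)).val < t := by
  simp [cyclicInterval]

lemma cyclicInterval_mono (s : Fin (n + 1)) {t t' : ℕ} (h : t ≤ t') :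
    cyclicInterval s t ⊆ cyclicInterval s t' := fun _ hx =>
  mem_cyclicInterval.2 ((mem_cyclicInterval.1 hx).trans_le h)

lemma card_cyclicInterval (s : Fin (n + 1)) {t : ℕ} (ht : t ≤ n + 1) :
    #(cyclicInterval s t) = t := by
  have : #(cyclicInterval s t) = #{y : Fin (n + 1) | y < t} :=
    card_equiv (Equiv.subRight s) (by simp [cyclicInterval])
  rw [this, Fin.card_filter_val_lt, min_eq_right ht]

/-- `s'` lies in `cyclicInterval s' t'` while `s' - 1` does not, which in `cyclicInterval s t`
happens only at `s' = s`. -/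
lemma eq_of_cyclicInterval_eq {s s' : Fin (n + 1)} {t t' : ℕ} (ht' : 0 < t')
    (ht'n : t' ≤ n) (h : cyclicInterval s t = cyclicInterval s' t') : s = s' := by
  by_contra hne
  have hs' : s' ∈ cyclicInterval s t := h ▸ mem_cyclicInterval.2 (by simpa using ht')
  have hpred : s' - 1 ∉ cyclicInterval s t := by
    rw [h, mem_cyclicInterval, sub_right_comm, sub_self, zero_sub, Fin.coe_neg_one]
    omega
  have hd : s' - s ≠ 0 := sub_ne_zero.2 (Ne.symm hne)
  rw [mem_cyclicInterval] at hs' hpred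
  rw [sub_right_comm, Fin.coe_sub_one, if_neg hd] at hpred
  omega

lemma cyclicInterval_injective :
    Injective fun x : Fin (n + 1) × Fin n => cyclicInterval x.1 (x.2 + 1) := by
  rintro ⟨s, t⟩ ⟨s', t'⟩ h
  have hs : s = s' := eq_of_cyclicInterval_eq (by omega) t'.is_lt h
  subst hs
  have := congrArg card h
  rw [card_cyclicInterval s (by omega : t.val + 1 ≤ n + 1),
    card_cyclicInterval s (by omega : t'.val + 1 ≤ n + 1)] at this
  simp only [Prod.mk.injEq, true_and]
  exact Fin.ext (by omega)

end CyclicInterval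

theorem hasMonochromaticM2_of_card_lt {n : ℕ} [Fintype κ] (hκ : Fintype.card κ < n)
    (χ : Finset (Fin (n + 1)) → κ) : HasMonochromaticM2 χ := by
  set I : Fin (n + 1) × Fin n → Finset (Fin (n + 1)) := fun x => cyclicInterval x.1 (x.2 + 1)
  have hI : Injective I := cyclicInterval_injective
  have hchain (s : Fin (n + 1)) : ∃ p q : Fin n, p < q ∧ χ (I (s, p)) = χ (I (s, q)) :=
    Fintype.exists_lt_map_eq_of_card_lt _ (by simpa using hκ)
  choose p q hpq hχ using hchain
  obtain ⟨s, s', hss', hχs⟩ :=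
    Fintype.exists_ne_map_eq_of_card_lt (fun s => χ (I (s, p s))) (by rw [Fintype.card_fin]; omega)
  have hsub (s : Fin (n + 1)) : I (s, p s) ⊆ I (s, q s) :=
    cyclicInterval_mono s (Nat.succ_le_succ (hpq s).le)
  refine ⟨I (s, p s), I (s, q s), I (s', p s'), I (s', q s'), hI.ne ?_, hI.ne ?_, hI.ne ?_,
    hI.ne ?_, hI.ne ?_, hI.ne ?_, (hχ s).symm, hχs.symm, ((hχ s').symm.trans hχs.symm),
    hsub s, hsub s'⟩ <;> simp [hss', (hpq s).ne, (hpq s').ne]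

section RankColoring

variable [Fintype α] {k : ℕ}

/-- Colour by size, with sizes `0, 1` sharing the colour `0` and all sizes `≥ k + 1` the colour `k`
(`#A - 1` truncates at `0`). -/
def rankColoring (k : ℕ) (A : Finset α) : Fin (k + 1) :=
  ⟨min (#A - 1) k, Nat.lt_succ_of_le (min_le_right _ _)⟩

lemma eq_empty_or_eq_univ_of_ssubset_of_rankColoring_eq (hα : Fintype.card α ≤ k + 2)
    {A B : Finset α} (hAB : A ⊂ B) (h : rankColoring k A = rankColoring k B) :
    (A = ∅ ∧ (rankColoring k A).val = 0) ∨ (B = univ ∧ (rankColoring k A).val = k) := by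
  have hlt := card_lt_card hAB
  have hB := card_le_univ B
  have hval : min (#A - 1) k = min (#B - 1) k := congrArg Fin.val h
  simp only [rankColoring, ← card_eq_zero, ← card_eq_iff_eq_univ]
  omega

theorem not_hasMonochromaticM2_rankColoring (hk : 1 ≤ k) (hα : Fintype.card α ≤ k + 2) :
    ¬ HasMonochromaticM2 (rankColoring (α := α) k) := by
  rintro ⟨A₁, B₁, A₂, B₂, hAB₁, hA, -, -, hB, hAB₂, hχ₁, hχA, hχ₂, hsub₁, hsub₂⟩
  have h₁ := eq_empty_or_eq_univ_of_ssubset_of_rankColoring_eq hα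
    (hsub₁.ssubset_of_ne hAB₁) hχ₁.symm
  have h₂ := eq_empty_or_eq_univ_of_ssubset_of_rankColoring_eq hα
    (hsub₂.ssubset_of_ne hAB₂) (hχA.trans hχ₂.symm)
  rw [hχA] at h₂
  rcases h₁ with ⟨rfl, h₁⟩ | ⟨rfl, h₁⟩ <;> rcases h₂ with ⟨rfl, h₂⟩ | ⟨rfl, h₂⟩
  exacts [hA rfl, by omega, by omega, hB rfl]

end RankColoring

theorem stmt4 (k : ℕ) (hk : 2 ≤ k) :
    IsLeast {N : ℕ | 0 < N ∧ ∀ χ : Finset (Fin N) → Fin k,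
        ∃ A₁ B₁ A₂ B₂ : Finset (Fin N),
          A₁ ≠ B₁ ∧ A₁ ≠ A₂ ∧ A₁ ≠ B₂ ∧ B₁ ≠ A₂ ∧ B₁ ≠ B₂ ∧ A₂ ≠ B₂ ∧
          χ B₁ = χ A₁ ∧ χ A₂ = χ A₁ ∧ χ B₂ = χ A₁ ∧
          A₁ ⊆ B₁ ∧ A₂ ⊆ B₂}
      (k + 2) := by
  obtain ⟨m, rfl⟩ : ∃ m, k = m + 1 := ⟨k - 1, by omega⟩
  refine ⟨⟨by omega, hasMonochromaticM2_of_card_lt (by simp)⟩, ?_⟩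
  rintro N ⟨-, hN⟩
  by_contra! hlt
  exact not_hasMonochromaticM2_rankColoring (by omega) (by rw [Fintype.card_fin]; omega) (hN _)
end

section
/- Let k ≥ 2 and s ≥ 3 be integers and let N = max(k+7, s). Then for every function χ from the subsets of [N] to {1,…,k} there exist 2s pairwise distinct subsets A_1,…,A_s, B_1,…,B_s of [N], all with the same χ-value, such that A_i ⊆ B_i for each i. (That is, R_k(𝓑 | M_s) ≤ max{k+7, s}.) -/
/-!
Suppose no colour class contains a copy of `M_s`. In each class, a maximal family of disjoint
strictly comparable pairs then has fewer than `s` pairs, so its fewer than `2s` members meet every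
strict comparability of the class; the union `W` of these `k` covers has at most
`2k(s - 1) < C(N, 3)` members. Reading off the initial segments of an injection
`Fin (k + 3) ↪ [N]` gives a chain, and a fixed set of size `i` (with `3 ≤ i ≤ k + 3`) is the
`i`-th segment of a `1 / C(N, i) ≤ 1 / C(N, 3)` fraction of the injections; so some chain
`X₃ ⊂ ⋯ ⊂ X_{k+3}` avoids `W`. Two of its `k + 1` sets share a colour, and since they are
strictly comparable one of them lies in `W`: a contradiction.
-/

open Finset

namespace Nat

theorem choose_le_choose_of_le_of_add_le_s5 {n r j : ℕ} (hrj : r ≤ j) (hjn : j + r ≤ n) :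
    n.choose r ≤ n.choose j := by
  have below_half : ∀ j, r ≤ j → j ≤ n / 2 → n.choose r ≤ n.choose j := by
    intro j hrj hj
    induction j, hrj using Nat.le_induction with
    | base => rfl
    | succ j _ ih => exact (ih (by omega)).trans (choose_le_succ_of_lt_half_left (by omega))
  rcases le_or_gt j (n / 2) with hj | hj
  · exact below_half j hrj hj
  · rw [← choose_symm (by omega : j ≤ n)]
    exact below_half (n - j) (by omega) (by omega)

theorem mul_two_mul_lt_choose_three {k s n : ℕ} (hk : k + 7 ≤ n) (hs : s ≤ n) :
    k * (2 * (s - 1)) < n.choose 3 := by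
  obtain ⟨b, rfl⟩ : ∃ b, n = b + 2 := ⟨n - 2, by omega⟩
  have hchoose : b * ((b + 1) * (b + 2)) = 6 * (b + 2).choose 3 := by
    simpa [descFactorial, factorial] using descFactorial_eq_factorial_mul_choose (b + 2) 3
  have hks : k * (s - 1) ≤ k * (b + 1) := Nat.mul_le_mul_left k (by omega)
  have hk12 : 12 * k * (b + 1) < b * (b + 2) * (b + 1) :=
    Nat.mul_lt_mul_of_pos_right (by nlinarith) (by omega)
  nlinarith

end Nat

section Matching

variable {α : Type*} [Preorder α]

def HasMatching (F : Finset α) (t : ℕ) : Prop :=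
  ∃ f : Fin t ⊕ Fin t → α, Function.Injective f ∧ (∀ x, f x ∈ F) ∧
    ∀ i, f (.inl i) ≤ f (.inr i)

theorem hasMatching_zero (F : Finset α) : HasMatching F 0 :=
  ⟨Sum.elim Fin.elim0 Fin.elim0, fun x => x.elim Fin.elim0 Fin.elim0,
    fun x => x.elim Fin.elim0 Fin.elim0, fun i => i.elim0⟩

theorem HasMatching.mono {F G : Finset α} {t : ℕ} (h : HasMatching F t) (hFG : F ⊆ G) :
    HasMatching G t :=
  let ⟨f, hf, hmem, hle⟩ := h
  ⟨f, hf, fun x => hFG (hmem x), hle⟩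

variable [DecidableEq α]

theorem HasMatching.insert_insert {F : Finset α} {t : ℕ} (h : HasMatching F t) {a b : α}
    (hab : a < b) (ha : a ∉ F) (hb : b ∉ F) : HasMatching (insert a (insert b F)) (t + 1) := by
  obtain ⟨f, hf, hmem, hle⟩ := h
  have hfa : ∀ x, f x ≠ a := fun x hx => ha (hx ▸ hmem x)
  have hfb : ∀ x, f x ≠ b := fun x hx => hb (hx ▸ hmem x)
  refine ⟨Sum.elim (Fin.cons a (f ∘ .inl)) (Fin.cons b (f ∘ .inr)), ?_, ?_, ?_⟩
  · refine Function.Injective.sumElim ?_ ?_ fun i j => ?_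
    · exact Fin.cons_injective_of_injective (by grind) (hf.comp Sum.inl_injective)
    · exact Fin.cons_injective_of_injective (by grind) (hf.comp Sum.inr_injective)
    · cases i using Fin.cases <;> cases j using Fin.cases <;>
        simp [hab.ne, hfb, (hfa _).symm, hf.ne]
  · rintro (i | i) <;> cases i using Fin.cases <;> simp [hmem]
  · intro i
    cases i using Fin.cases
    · exact hab.le
    · exact hle _

theorem exists_cover_of_not_hasMatching {F : Finset α} {t : ℕ}
    (h : ¬ HasMatching F (t + 1)) :
    ∃ W : Finset α, #W ≤ 2 * t ∧ ∀ a ∈ F, ∀ b ∈ F, a < b → a ∈ W ∨ b ∈ W := by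
  by_cases hpair : ∃ a ∈ F, ∃ b ∈ F, a < b
  swap
  · push Not at hpair
    exact ⟨∅, by simp, fun a ha b hb hab => absurd hab (hpair a ha b hb)⟩
  obtain ⟨a, ha, b, hb, hab⟩ := hpair
  set F' := (F.erase b).erase a
  have h' : ¬ HasMatching F' t := fun h' =>
    h <| (h'.insert_insert hab (by simp [F']) (by simp [F', hab.ne'])).mono (by grind)
  cases t with
  | zero => exact absurd (hasMatching_zero F') h'
  | succ t =>
    obtain ⟨W, hW, hcover⟩ := exists_cover_of_not_hasMatching h'
    refine ⟨insert a (insert b W), ?_, fun c hc d hd hcd => ?_⟩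
    · grind [card_insert_le]
    · grind

end Matching

namespace Function.Embedding

variable {α : Type*} {m : ℕ}

def prefixSet (u : Fin m ↪ α) (j : ℕ) : Finset α :=
  Finset.map u {i : Fin m | (i : ℕ) < j}

theorem card_prefixSet (u : Fin m ↪ α) {j : ℕ} (hj : j ≤ m) : #(u.prefixSet j) = j := by
  rw [prefixSet, card_map, Fin.card_filter_val_lt, min_eq_right hj]

theorem prefixSet_mono (u : Fin m ↪ α) : Monotone u.prefixSet := fun _ _ hjj' =>
  map_subset_map.2 (monotone_filter_right _ fun _ _ hi => hi.trans_le hjj')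

theorem prefixSet_trans (u : Fin m ↪ α) (σ : Equiv.Perm α) (j : ℕ) :
    (u.trans σ.toEmbedding).prefixSet j = (u.prefixSet j).map σ.toEmbedding :=
  (map_map ..).symm

theorem prefixSet_strictMonoOn (u : Fin m ↪ α) : StrictMonoOn u.prefixSet (Set.Iic m) :=
  fun j hj j' hj' hjj' => (u.prefixSet_mono hjj'.le).ssubset_of_ne fun h => by
    have := congrArg card h
    rw [u.card_prefixSet hj, u.card_prefixSet hj'] at this
    exact hjj'.ne this

variable [Fintype α] [DecidableEq α]

theorem card_filter_prefixSet_eq_of_card_eq {X Y : Finset α} (hXY : #X = #Y) (j : ℕ) :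
    #{u : Fin m ↪ α | u.prefixSet j = X} = #{u : Fin m ↪ α | u.prefixSet j = Y} := by
  obtain ⟨σ, rfl⟩ := Equiv.Perm.exists_map_finset_eq X Y hXY
  refine card_nbij' (·.trans σ.toEmbedding) (·.trans σ.symm.toEmbedding) ?_ ?_ ?_ ?_
  · intro u hu
    simp_all [prefixSet_trans]
  · intro u hu
    simp_all [prefixSet_trans, map_map]
  · intro u _
    ext; simp
  · intro u _
    ext; simp

theorem card_filter_prefixSet_mul_choose {X : Finset α} (hX : #X ≤ m) :
    #{u : Fin m ↪ α | u.prefixSet #X = X} * (Fintype.card α).choose #X =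
      Fintype.card (Fin m ↪ α) := by
  calc #{u : Fin m ↪ α | u.prefixSet #X = X} * (Fintype.card α).choose #X
      = ∑ Y ∈ powersetCard #X univ, #{u : Fin m ↪ α | u.prefixSet #X = Y} := by
        rw [sum_congr rfl fun Y hY => card_filter_prefixSet_eq_of_card_eq
          (mem_powersetCard.1 hY).2 #X, sum_const, card_powersetCard, card_univ, smul_eq_mul,
          mul_comm]
    _ = Fintype.card (Fin m ↪ α) :=
        (card_eq_sum_card_fiberwise fun u _ =>
          mem_powersetCard.2 ⟨subset_univ _, u.card_prefixSet hX⟩).symm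

end Function.Embedding

open Function.Embedding in
theorem Finset.exists_strictMono_forall_notMem {α : Type*} [Fintype α] [DecidableEq α] {r l : ℕ}
    (hn : 2 * r + l ≤ Fintype.card α) {W : Finset (Finset α)}
    (hW : #W < (Fintype.card α).choose r) :
    ∃ C : Fin (l + 1) → Finset α, StrictMono C ∧ ∀ j, C j ∉ W := by
  set n := Fintype.card α
  let W' := {X ∈ W | r ≤ #X ∧ #X ≤ r + l}
  let bad := W'.biUnion fun X => {u : Fin (r + l) ↪ α | u.prefixSet #X = X}
  have hT : 0 < Fintype.card (Fin (r + l) ↪ α) :=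
    Fintype.card_pos_iff.2 (nonempty_of_card_le (by rw [Fintype.card_fin]; omega))
  have hbad : #bad * n.choose r < Fintype.card (Fin (r + l) ↪ α) * n.choose r :=
    calc #bad * n.choose r
        ≤ ∑ X ∈ W', #{u : Fin (r + l) ↪ α | u.prefixSet #X = X} * n.choose r := by
          rw [← sum_mul]; gcongr; exact card_biUnion_le
      _ ≤ ∑ X ∈ W', Fintype.card (Fin (r + l) ↪ α) := by
          refine sum_le_sum fun X hX => ?_
          have hX := (mem_filter.1 hX).2
          rw [← card_filter_prefixSet_mul_choose hX.2]
          gcongr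
          exact Nat.choose_le_choose_of_le_of_add_le_s5 hX.1 (by omega)
      _ < n.choose r * Fintype.card (Fin (r + l) ↪ α) := by
          rw [sum_const, smul_eq_mul]
          exact Nat.mul_lt_mul_of_pos_right ((card_filter_le _ _).trans_lt hW) hT
      _ = _ := mul_comm _ _
  obtain ⟨u, -, hu⟩ := exists_mem_notMem_of_card_lt_card (s := bad) (t := univ)
    (by rw [card_univ]; exact Nat.lt_of_mul_lt_mul_right hbad)
  refine ⟨fun j => u.prefixSet (r + j), fun a b hab => ?_, fun j hj => hu ?_⟩
  · exact u.prefixSet_strictMonoOn (Set.mem_Iic.2 (by omega)) (Set.mem_Iic.2 (by omega))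
      (Nat.add_lt_add_left hab r)
  · have hcard := u.card_prefixSet (j := r + j) (by omega)
    exact mem_biUnion.2 ⟨u.prefixSet (r + j), mem_filter.2 ⟨hj, by omega⟩,
      mem_filter.2 ⟨mem_univ _, by rw [hcard]⟩⟩

theorem exists_hasMatching_monochromatic {α κ : Type*} [Fintype α] [DecidableEq α] [Fintype κ]
    [DecidableEq κ] (χ : Finset α → κ) {r s : ℕ}
    (hn : 2 * r + Fintype.card κ ≤ Fintype.card α)
    (hs : Fintype.card κ * (2 * (s - 1)) < (Fintype.card α).choose r) :
    ∃ c, HasMatching {X | χ X = c} s := by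
  rcases s with _ | t
  · exact ⟨χ ∅, hasMatching_zero _⟩
  by_contra! h
  choose W hWcard hW using fun c => exists_cover_of_not_hasMatching (h c)
  obtain ⟨C, hC, hCW⟩ := exists_strictMono_forall_notMem hn (W := univ.biUnion W)
    ((card_biUnion_le_card_mul _ _ _ fun c _ => hWcard c).trans_lt (by simpa using hs))
  have hcovered : ∀ a b, a < b → χ (C a) ≠ χ (C b) := by
    intro a b hab hχ
    rcases hW (χ (C a)) (C a) (by simp) (C b) (by simp [hχ]) (hC hab) with h | h <;>
      exact hCW _ (mem_biUnion.2 ⟨_, mem_univ _, h⟩)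
  obtain ⟨a, b, hab, hχ⟩ := Fintype.exists_ne_map_eq_of_card_lt (χ ∘ C) (by simp)
  rcases hab.lt_or_gt with hab | hab
  exacts [hcovered a b hab hχ, hcovered b a hab hχ.symm]

theorem stmt5_general (k s : ℕ)
    (χ : Finset (Fin (max (k + 7) s)) → Fin k) :
    ∃ f : Fin s ⊕ Fin s → Finset (Fin (max (k + 7) s)),
      Function.Injective f ∧ (∃ c : Fin k, ∀ x, χ (f x) = c) ∧
      ∀ i : Fin s, f (Sum.inl i) ⊆ f (Sum.inr i) := by
  obtain ⟨c, f, hf, hmem, hle⟩ := exists_hasMatching_monochromatic χ (r := 3) (s := s)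
    (by simp only [Fintype.card_fin]; omega)
    (by simpa using Nat.mul_two_mul_lt_choose_three (le_max_left (k + 7) s) (le_max_right _ _))
  exact ⟨f, hf, ⟨c, fun x => (mem_filter.1 (hmem x)).2⟩, hle⟩

theorem stmt5 (k s : ℕ) (hk : 2 ≤ k) (hs : 3 ≤ s)
    (χ : Finset (Fin (max (k + 7) s)) → Fin k) :
    ∃ f : Fin s ⊕ Fin s → Finset (Fin (max (k + 7) s)),
      Function.Injective f ∧ (∃ c : Fin k, ∀ x, χ (f x) = c) ∧
      ∀ i : Fin s, f (Sum.inl i) ⊆ f (Sum.inr i) :=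
  stmt5_general k s χ
end

section
/- Let k ≥ 2 and s ≥ 2 be integers. There exists a function χ from the subsets of [k+1] to {1,…,k} such that there do not exist 2s pairwise distinct subsets A_1,…,A_s, B_1,…,B_s of [k+1], all with the same χ-value, with A_i ⊆ B_i for each i. (That is, R_k(𝓑 | M_s) ≥ k+2.) -/
theorem stmt6 (k s : ℕ) (hk : 2 ≤ k) (hs : 2 ≤ s) :
    ∃ χ : Finset (Fin (k + 1)) → Fin k,
      ¬ ∃ f : Fin s ⊕ Fin s → Finset (Fin (k + 1)),
        Function.Injective f ∧ (∃ c : Fin k, ∀ x, χ (f x) = c) ∧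
        ∀ i : Fin s, f (Sum.inl i) ⊆ f (Sum.inr i) := by
  refine ⟨fun A => ⟨min (max A.card 1) k - 1, by
    have := min_le_right (max A.card 1) k; omega⟩, ?_⟩
  rintro ⟨f, hinj, ⟨c, hc⟩, hsub⟩
  have hclt : (c : ℕ) < k := c.isLt
  have key : ∀ i : Fin s,
      ((f (Sum.inl i) = ∅ ∧ (c : ℕ) = 0) ∨
       (f (Sum.inr i) = Finset.univ ∧ (c : ℕ) = k - 1)) := by
    intro i
    have hne : f (Sum.inl i) ≠ f (Sum.inr i) := fun h => by
      simpa using hinj h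
    have hlt : (f (Sum.inl i)).card < (f (Sum.inr i)).card :=
      Finset.card_lt_card (lt_of_le_of_ne (hsub i) hne)
    have hb : (f (Sum.inr i)).card ≤ k + 1 := by
      simpa using Finset.card_le_univ (f (Sum.inr i))
    have e1 : min (max (f (Sum.inl i)).card 1) k - 1 = (c : ℕ) :=
      congrArg Fin.val (hc (Sum.inl i))
    have e2 : min (max (f (Sum.inr i)).card 1) k - 1 = (c : ℕ) :=
      congrArg Fin.val (hc (Sum.inr i))
    set a := (f (Sum.inl i)).card with ha
    set b := (f (Sum.inr i)).card with hb'
    have : a = 0 ∧ (c : ℕ) = 0 ∨ b = k + 1 ∧ (c : ℕ) = k - 1 := by omega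
    rcases this with ⟨h0, hc0⟩ | ⟨hK, hcK⟩
    · exact Or.inl ⟨Finset.card_eq_zero.mp h0, hc0⟩
    · refine Or.inr ⟨Finset.eq_univ_of_card _ ?_, hcK⟩
      simpa using hK
  have h0 := key ⟨0, by omega⟩
  have h1 := key ⟨1, by omega⟩
  rcases h0 with ⟨h0, hc0⟩ | ⟨h0, hc0⟩ <;> rcases h1 with ⟨h1, hc1⟩ | ⟨h1, hc1⟩
  · have := hinj (h0.trans h1.symm)
    simp [Fin.ext_iff] at this
  · omega
  · omega
  · have := hinj (h0.trans h1.symm)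
    simp [Fin.ext_iff] at this
end

section
/- Let k ≥ 2 and t ≥ 2 be integers and let P_1,…,P_k be finite posets in each of which every element lies in at least one t-chain. For 1 ≤ i ≤ k let n_i = |P_i| and let m_i be the number of t-chains of P_i, and assume 2 ≤ t ≤ n_1 ≤ n_2 ≤ … ≤ n_k and n_k ≥ 3. Let m = min{m_1,…,m_{k−1}} and assume m ≥ 1. Let d = binom(n_k, t) − m_k, let a = max{ binom(binom(n_i, t), m_i) : 1 ≤ i ≤ k−1 }, and let C_0 = ((k−1)^{m−1}/(2·e·a)) · (n_1/e)^{n_1}, where e is Euler's number. If a positive integer n satisfies ln n < m_k/(n_k + t·d + 2) and (ln n)^m · n^{n_{k−1}} < C_0 · (m_k/(n_k + t·d + 2))^m, then for every finite poset Q with n elements there exists a coloring χ of the t-chains of Q with colors {1,…,k} such that for no i ∈ {1,…,k} is there a monochromatic copy of P_i in color i; that is, for no i does there exist an injection f : P_i → Q with f(x) ≤ f(y) in Q whenever x ≤ y in P_i such that χ(C) = i for every t-chain C of Q all of whose elements lie in the image of f. -/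
/-!
Colour the `t`-chains of `Q` independently at random: colour `k` with probability
`1 - log n / B`, where `B = m_k / (n_k + t d + 2)`, and each other colour with probability
`q = log n / ((k - 1) B)`. The `t`-chains of a copy of `P_i` form `m_i` of the at most
`binom(n_i, t)` chains inside an `n_i`-subset of `Q`, so the expected number of copies of `P_i`
monochromatic in colour `i` is at most `binom(n, n_i) binom(binom(n_i, t), m_i) p_i ^ m_i`,
where `p_i` is the probability of colour `i`.
Using `1 - x ≤ exp (-x)` the last colour contributes at most `n⁻²`, and the second condition on
`n` together with `n₁! ≥ (n₁ / e) ^ n₁` makes the other `k - 1` colours contribute less than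
`1 / (2e)`; the total is below `1`, so some colouring has no monochromatic copy.
-/

/-- The set of `t`-chains of a poset `Q`: sets of `t` distinct pairwise
comparable elements. -/
def tChainSet (Q : Type*) [PartialOrder Q] (t : ℕ) : Set (Finset Q) :=
  {C | C.card = t ∧ ∀ a ∈ C, ∀ b ∈ C, a ≤ b ∨ b ≤ a}

open Finset Real
open scoped Nat

section ProbabilisticMethod

variable {ι κ : Type*} [Fintype ι] [DecidableEq ι] [Fintype κ]

/- `∏ C, w (g C)` is the probability of the colouring `g` when every `C` is coloured
independently with distribution `w`. -/
lemma sum_prod_weight_eq_one {w : κ → ℝ} (hw : ∑ j, w j = 1) :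
    ∑ g : ι → κ, ∏ C, w (g C) = 1 := by
  rw [← Fintype.prod_sum]
  simp [hw]

lemma sum_prod_weight_filter_forall_eq [DecidableEq κ] {w : κ → ℝ} (hw : ∑ j, w j = 1)
    (T : Finset ι) (i : κ) :
    ∑ g : ι → κ with ∀ C ∈ T, g C = i, ∏ C, w (g C) = w i ^ #T := by
  have hmask : ∀ g : ι → κ, (if ∀ C ∈ T, g C = i then ∏ C, w (g C) else 0) =
      ∏ C, if C ∈ T → g C = i then w (g C) else 0 := by
    intro g
    rw [prod_ite_zero]
    simp
  rw [sum_filter, sum_congr rfl fun g _ => hmask g,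
    ← Fintype.prod_sum fun C j => if C ∈ T → j = i then w j else 0]
  have hfactor : ∀ C, (∑ j, if C ∈ T → j = i then w j else 0) =
      if C ∈ T then w i else 1 := by
    intro C
    by_cases hC : C ∈ T <;> simp [hC, hw]
  simp only [hfactor, prod_ite_mem, univ_inter, prod_const]

theorem exists_forall_exists_ne_of_sum_pow_lt_one [DecidableEq κ] {w : κ → ℝ}
    (hw0 : ∀ j, 0 ≤ w j) (hw : ∑ j, w j = 1) (E : κ → Finset (Finset ι))
    (hE : ∑ i, ∑ T ∈ E i, w i ^ #T < 1) :
    ∃ g : ι → κ, ∀ i, ∀ T ∈ E i, ∃ C ∈ T, g C ≠ i := by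
  by_contra! hbad
  refine hE.not_ge ?_
  have hprob : ∀ g : ι → κ, 0 ≤ ∏ C, w (g C) := fun g => prod_nonneg fun C _ => hw0 (g C)
  calc 1 = ∑ g : ι → κ, ∏ C, w (g C) := (sum_prod_weight_eq_one hw).symm
    _ ≤ ∑ g : ι → κ, ∑ i, ∑ T ∈ E i,
          if ∀ C ∈ T, g C = i then ∏ C, w (g C) else 0 := by
      gcongr with g
      obtain ⟨i, T, hT, hgT⟩ := hbad g
      have hnonneg : ∀ i (T : Finset ι),
          0 ≤ if ∀ C ∈ T, g C = i then ∏ C, w (g C) else 0 :=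
        fun _ _ => by split_ifs <;> simp [hprob]
      calc ∏ C, w (g C) = if ∀ C ∈ T, g C = i then ∏ C, w (g C) else 0 := (if_pos hgT).symm
        _ ≤ ∑ T ∈ E i, if ∀ C ∈ T, g C = i then ∏ C, w (g C) else 0 :=
          single_le_sum (fun T _ => hnonneg i T) hT
        _ ≤ _ := single_le_sum (f := fun i => ∑ T ∈ E i, _)
          (fun i _ => sum_nonneg fun T _ => hnonneg i T) (mem_univ i)
    _ = ∑ i, ∑ T ∈ E i, w i ^ #T := by
      rw [sum_comm]
      refine sum_congr rfl fun i _ => ?_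
      rw [sum_comm]
      exact sum_congr rfl fun T _ => by rw [← sum_filter, sum_prod_weight_filter_forall_eq hw]

end ProbabilisticMethod

section Chains

variable {P Q : Type*} [PartialOrder P] [PartialOrder Q] {t : ℕ}

lemma image_mem_tChainSet [DecidableEq Q] {f : P → Q} (hf : Function.Injective f)
    (hmono : Monotone f) {C : Finset P} (hC : C ∈ tChainSet P t) :
    C.image f ∈ tChainSet Q t := by
  refine ⟨by rw [card_image_of_injective _ hf, hC.1], ?_⟩
  simp only [mem_image, forall_exists_index, and_imp, forall_apply_eq_imp_iff₂]
  intro x hx y hy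
  exact (hC.2 x hx y hy).imp (fun h => hmono h) (fun h => hmono h)

variable (Q t) [Fintype Q]

noncomputable def tChains : Finset (Finset Q) := (Set.toFinite (tChainSet Q t)).toFinset

variable {Q t}

@[simp]
lemma mem_tChains {C : Finset Q} : C ∈ tChains Q t ↔ C ∈ tChainSet Q t :=
  Set.Finite.mem_toFinset _

lemma card_tChains : #(tChains Q t) = (tChainSet Q t).ncard :=
  (Set.ncard_eq_toFinset_card _ _).symm

lemma filter_tChains_subset_powersetCard [DecidableEq Q] (S : Finset Q) :
    {C ∈ tChains Q t | C ⊆ S} ⊆ powersetCard t S := fun C hC => by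
  rw [mem_filter, mem_tChains] at hC
  exact mem_powersetCard.mpr ⟨hC.2, hC.1.1⟩

lemma ncard_tChainSet_le_choose : (tChainSet Q t).ncard ≤ (Fintype.card Q).choose t := by
  classical
  simpa [← card_tChains] using card_le_card (filter_tChains_subset_powersetCard (t := t) univ)

variable (Q t) [DecidableEq Q]

noncomputable def chainFamilies (s r : ℕ) : Finset (Finset (Finset Q)) :=
  (powersetCard s univ).biUnion fun S => powersetCard r {C ∈ tChains Q t | C ⊆ S}

variable {Q t}

lemma card_chainFamilies_le (s r : ℕ) :
    #(chainFamilies Q t s r) ≤ (Fintype.card Q).choose s * (s.choose t).choose r := by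
  refine (card_biUnion_le_card_mul _ _ _ fun S hS => ?_).trans_eq
    (by rw [card_powersetCard, card_univ])
  rw [card_powersetCard]
  refine Nat.choose_le_choose _ ((card_le_card (filter_tChains_subset_powersetCard S)).trans ?_)
  rw [card_powersetCard, (mem_powersetCard.mp hS).2]

lemma card_eq_of_mem_chainFamilies {s r : ℕ} {T : Finset (Finset Q)}
    (hT : T ∈ chainFamilies Q t s r) : #T = r := by
  obtain ⟨S, -, hT⟩ := mem_biUnion.mp hT
  exact (mem_powersetCard.mp hT).2

lemma image_tChains_mem_chainFamilies [Fintype P] {f : P → Q} (hf : Function.Injective f)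
    (hmono : Monotone f) :
    (tChains P t).image (image f) ∈
      chainFamilies Q t (Fintype.card P) (tChainSet P t).ncard := by
  refine mem_biUnion.mpr ⟨univ.image f, ?_, mem_powersetCard.mpr ⟨?_, ?_⟩⟩
  · simp [card_image_of_injective _ hf]
  · intro _ hT
    obtain ⟨C, hC, rfl⟩ := mem_image.mp hT
    rw [mem_tChains] at hC
    exact mem_filter.mpr ⟨mem_tChains.mpr (image_mem_tChainSet hf hmono hC),
      image_subset_image (subset_univ C)⟩
  · rw [card_image_of_injective _ (image_injective hf), card_tChains]

end Chains

section Copies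

variable {κ : Type*} [Fintype κ] [DecidableEq κ]

lemma sum_update_div_eq_one (hκ : 1 < Fintype.card κ) (j₀ : κ) (x : ℝ) :
    ∑ j, Function.update (fun _ => x / (Fintype.card κ - 1)) j₀ (1 - x) j = 1 := by
  have hκ' : (Fintype.card κ : ℝ) - 1 ≠ 0 := sub_ne_zero.mpr (by exact_mod_cast hκ.ne')
  rw [sum_update_of_mem (mem_univ j₀), sum_const, card_sdiff_of_subset (by simp), card_univ,
    card_singleton, nsmul_eq_mul, Nat.cast_sub hκ.le, Nat.cast_one]
  field_simp
  ring

def IsMonochromaticCopy {P Q : Type*} [PartialOrder P] [PartialOrder Q] (t : ℕ)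
    (χ : Finset Q → κ) (i : κ) (f : P → Q) : Prop :=
  Function.Injective f ∧ (∀ x y : P, x ≤ y → f x ≤ f y) ∧
    ∀ C ∈ tChainSet Q t, (∀ q ∈ C, q ∈ Set.range f) → χ C = i

/-- Union bound for the probability that some copy of `P` in `Q` gets a colour of probability
`x` on all its `t`-chains. -/
noncomputable def copyBound (P Q : Type*) [Fintype P] [PartialOrder P] [Fintype Q] (t : ℕ)
    (x : ℝ) : ℝ :=
  (Fintype.card Q).choose (Fintype.card P) *
    ((Fintype.card P).choose t).choose (tChainSet P t).ncard * x ^ (tChainSet P t).ncard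

variable (P : κ → Type*) [∀ i, Fintype (P i)] [∀ i, PartialOrder (P i)]
  (Q : Type*) [Fintype Q] [PartialOrder Q] (t : ℕ)

theorem exists_coloring_forall_not_isMonochromaticCopy {w : κ → ℝ} (hw0 : ∀ j, 0 ≤ w j)
    (hw : ∑ j, w j = 1) (hsum : ∑ i, copyBound (P i) Q t (w i) < 1) :
    ∃ χ : Finset Q → κ, ∀ i, ¬ ∃ f : P i → Q, IsMonochromaticCopy t χ i f := by
  classical
  set E : κ → Finset (Finset (Finset Q)) := fun i =>
    chainFamilies Q t (Fintype.card (P i)) (tChainSet (P i) t).ncard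
  have hE : ∑ i, ∑ T ∈ E i, w i ^ #T < 1 := by
    refine lt_of_le_of_lt (sum_le_sum fun i _ => ?_) hsum
    rw [sum_congr rfl fun T hT => by rw [card_eq_of_mem_chainFamilies hT], sum_const,
      nsmul_eq_mul, copyBound]
    gcongr
    · exact pow_nonneg (hw0 i) _
    · exact_mod_cast card_chainFamilies_le _ _
  obtain ⟨χ, hχ⟩ := exists_forall_exists_ne_of_sum_pow_lt_one hw0 hw E hE
  refine ⟨χ, fun i ⟨f, hf, hmono, hcolor⟩ => ?_⟩
  obtain ⟨_, hfC, hχC⟩ := hχ i _ (image_tChains_mem_chainFamilies hf hmono)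
  obtain ⟨C, hC, rfl⟩ := mem_image.mp hfC
  refine hχC (hcolor _ (image_mem_tChainSet hf hmono (mem_tChains.mp hC)) fun q hq => ?_)
  obtain ⟨x, -, rfl⟩ := mem_image.mp hq
  exact Set.mem_range_self x

theorem exists_coloring_of_copyBound_add_sum_lt_one (hκ : 1 < Fintype.card κ) (j₀ : κ)
    {x : ℝ} (hx0 : 0 ≤ x) (hx1 : x ≤ 1)
    (h : copyBound (P j₀) Q t (1 - x) +
      ∑ i ∈ univ.erase j₀, copyBound (P i) Q t (x / (Fintype.card κ - 1)) < 1) :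
    ∃ χ : Finset Q → κ, ∀ i, ¬ ∃ f : P i → Q, IsMonochromaticCopy t χ i f := by
  refine exists_coloring_forall_not_isMonochromaticCopy P Q t (fun j => ?_)
    (sum_update_div_eq_one hκ j₀ x) ?_
  · rcases eq_or_ne j j₀ with rfl | hj
    · simpa using hx1
    · have : (1 : ℝ) < Fintype.card κ := by exact_mod_cast hκ
      simpa [hj] using div_nonneg hx0 (by linarith)
  · rwa [← add_sum_erase _ _ (mem_univ j₀), Function.update_self,
      sum_congr rfl fun i hi => by rw [Function.update_of_ne (ne_of_mem_erase hi)]]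

end Copies

lemma div_exp_one_pow_le_factorial (n : ℕ) : ((n : ℝ) / exp 1) ^ n ≤ n ! := by
  have h := Real.pow_div_factorial_le_exp (n : ℝ) n.cast_nonneg n
  rw [div_le_iff₀ (by positivity), ← exp_one_pow] at h
  rw [div_pow, div_le_iff₀ (by positivity)]
  linarith

lemma choose_choose_le_pow {n nk t mk : ℕ} (hn : nk ≤ n) (hmk : mk ≤ nk.choose t) :
    (nk.choose t).choose mk ≤ n ^ (t * (nk.choose t - mk)) := by
  rw [← Nat.choose_symm hmk, pow_mul]
  calc (nk.choose t).choose (nk.choose t - mk) ≤ (nk.choose t) ^ (nk.choose t - mk) :=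
        Nat.choose_le_pow _ _
    _ ≤ (n ^ t) ^ (nk.choose t - mk) := by
        gcongr
        exact (Nat.choose_le_pow _ _).trans (Nat.pow_le_pow_left hn t)

lemma one_sub_log_div_pow_le {n mk D : ℕ} (hn : 0 < n) (hmk : 0 < mk) (hD : 0 < D)
    (h : 0 ≤ 1 - log n / (mk / D)) : (1 - log n / (mk / D)) ^ mk ≤ ((n : ℝ)⁻¹) ^ D := by
  calc (1 - log n / (mk / D)) ^ mk ≤ exp (-(log n / (mk / D))) ^ mk :=
        pow_le_pow_left₀ h (one_sub_le_exp_neg _) mk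
    _ = ((n : ℝ)⁻¹) ^ D := by
        rw [← exp_nat_mul, ← exp_log (inv_pos.mpr (Nat.cast_pos.mpr hn)), ← exp_nat_mul,
          log_inv]
        congr 1
        field_simp

lemma choose_mul_choose_choose_mul_one_sub_pow_le {n nk t mk d : ℕ} (hn : 0 < n) (hnk : 3 ≤ nk)
    (hmk : mk ≤ nk.choose t) (hd : d = nk.choose t - mk)
    (h1 : log n < mk / ((nk : ℝ) + t * d + 2)) :
    (n.choose nk : ℝ) * (nk.choose t).choose mk *
      (1 - log n / (mk / ((nk : ℝ) + t * d + 2))) ^ mk ≤ 1 / 4 := by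
  rcases lt_or_ge n nk with hlt | hle
  · simp [Nat.choose_eq_zero_of_lt hlt]
  have hmk0 : 0 < mk := by
    by_contra! h0
    simp only [nonpos_iff_eq_zero.mp h0, CharP.cast_eq_zero, zero_div] at h1
    linarith [log_natCast_nonneg n]
  have hD : ((nk + t * d + 2 : ℕ) : ℝ) = (nk : ℝ) + t * d + 2 := by push_cast; ring
  have hbase : 0 ≤ 1 - log n / (mk / ((nk : ℝ) + t * d + 2)) := by
    rw [sub_nonneg, div_le_one (by positivity)]
    exact h1.le
  have hcount : (n.choose nk : ℝ) * (nk.choose t).choose mk ≤ (n : ℝ) ^ (nk + t * d) := by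
    rw [pow_add]
    exact_mod_cast Nat.mul_le_mul (Nat.choose_le_pow _ _) (hd ▸ choose_choose_le_pow hle hmk)
  have hprob := one_sub_log_div_pow_le (D := nk + t * d + 2) hn hmk0 (by omega) (by rwa [hD])
  rw [hD] at hprob
  have hn2 : (2 : ℝ) ≤ n := by exact_mod_cast (by omega : 2 ≤ n)
  calc _ ≤ (n : ℝ) ^ (nk + t * d) * ((n : ℝ)⁻¹) ^ (nk + t * d + 2) :=
        mul_le_mul hcount hprob (pow_nonneg hbase _) (by positivity)
    _ = ((n : ℝ) ^ 2)⁻¹ := by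
        rw [inv_pow, pow_add _ (nk + t * d) 2]
        field_simp
    _ ≤ 1 / 4 := by
        rw [one_div]
        gcongr
        nlinarith

lemma choose_mul_choose_choose_mul_pow_le {n n1 ni p t mi m a : ℕ} {q : ℝ} (hn : 0 < n)
    (h1i : n1 ≤ ni) (hip : ni ≤ p) (hmi : m ≤ mi) (ha : (ni.choose t).choose mi ≤ a)
    (hq0 : 0 ≤ q) (hq1 : q ≤ 1) :
    (n.choose ni : ℝ) * (ni.choose t).choose mi * q ^ mi ≤ n ^ p / n1 ! * a * q ^ m := by
  gcongr ?_ * ?_ * ?_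
  · calc (n.choose ni : ℝ) ≤ n ^ ni / ni ! := Nat.choose_le_pow_div _ _
      _ ≤ n ^ p / n1 ! := by
        gcongr
        exact_mod_cast hn
  · exact_mod_cast ha
  · exact pow_le_pow_of_le_one hq0 hq1 hmi

lemma sub_one_mul_pow_div_factorial_mul_pow_lt {k m n1 a : ℕ} {L B X : ℝ} (hk : 2 ≤ k)
    (hm : 1 ≤ m) (hB : 0 < B)
    (h2 : L ^ m * X <
      ((k - 1 : ℝ) ^ (m - 1) / (2 * exp 1 * a)) * ((n1 : ℝ) / exp 1) ^ n1 * B ^ m) :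
    ((k : ℝ) - 1) * (X / n1 ! * a * (L / B / (k - 1)) ^ m) < 1 / 4 := by
  rcases Nat.eq_zero_or_pos a with rfl | ha
  · norm_num
  obtain ⟨m, rfl⟩ : ∃ m', m = m' + 1 := ⟨m - 1, by omega⟩
  have hK : (0 : ℝ) < k - 1 := by
    have : (2 : ℝ) ≤ k := by exact_mod_cast hk
    linarith
  have he : (2 : ℝ) < exp 1 := lt_trans (by norm_num) exp_one_gt_d9
  calc ((k : ℝ) - 1) * (X / n1 ! * a * (L / B / (k - 1)) ^ (m + 1)) =
        a / ((k - 1) ^ m * n1 ! * B ^ (m + 1)) * (L ^ (m + 1) * X) := by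
        rw [div_pow, div_pow, pow_succ ((k : ℝ) - 1)]
        field_simp
    _ ≤ a / ((k - 1) ^ m * n1 ! * B ^ (m + 1)) *
        (((k - 1 : ℝ) ^ m / (2 * exp 1 * a)) * ((n1 : ℝ) / exp 1) ^ n1 * B ^ (m + 1)) := by
        simp only [add_tsub_cancel_right] at h2
        gcongr
    _ = ((n1 : ℝ) / exp 1) ^ n1 / n1 ! / (2 * exp 1) := by
        field_simp
    _ ≤ 1 / (2 * exp 1) := by
        gcongr
        exact div_le_one_of_le₀ (div_exp_one_pow_le_factorial n1) (by positivity)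
    _ < 1 / 4 := by
        gcongr
        linarith

theorem stmt7 (k t : ℕ) (hk : 2 ≤ k)
    (P : Fin k → Type) [∀ i, Fintype (P i)] [∀ i, PartialOrder (P i)]
    -- `n_1 ≤ n_2 ≤ … ≤ n_k`
    (hmono : ∀ i j : Fin k, i ≤ j → Fintype.card (P i) ≤ Fintype.card (P j))
    -- `3 ≤ n_k`
    (hn3 : 3 ≤ Fintype.card (P ⟨k - 1, by omega⟩))
    -- `m = min{m_1, …, m_{k-1}}`, and `m ≥ 1`
    (m : ℕ)
    (hm : IsLeast {x : ℕ | ∃ i : Fin k, (i : ℕ) < k - 1 ∧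
        x = (tChainSet (P i) t).ncard} m)
    (hm1 : 1 ≤ m)
    -- `a = max{ binom(binom(n_i, t), m_i) : 1 ≤ i ≤ k-1 }`
    (a : ℕ)
    (ha : IsGreatest {x : ℕ | ∃ i : Fin k, (i : ℕ) < k - 1 ∧
        x = Nat.choose (Nat.choose (Fintype.card (P i)) t)
              ((tChainSet (P i) t).ncard)} a)
    -- `n_k`, `m_k`, `d = binom(n_k, t) − m_k` and the constant `C_0`
    (nk mk d : ℕ)
    (hnk : nk = Fintype.card (P ⟨k - 1, by omega⟩))
    (hmk : mk = (tChainSet (P ⟨k - 1, by omega⟩) t).ncard)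
    (hd : d = Nat.choose nk t - mk)
    (C0 : ℝ)
    (hC0 : C0 = (((k : ℝ) - 1) ^ (m - 1) / (2 * Real.exp 1 * (a : ℝ))) *
        ((Fintype.card (P ⟨0, by omega⟩) : ℝ) / Real.exp 1) ^ (Fintype.card (P ⟨0, by omega⟩)))
    -- the two conditions on `n`
    (n : ℕ) (hn : 0 < n)
    (h1 : Real.log n < (mk : ℝ) / ((nk : ℝ) + (t : ℝ) * (d : ℝ) + 2))
    (h2 : (Real.log n) ^ m * (n : ℝ) ^ (Fintype.card (P ⟨k - 2, by omega⟩)) <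
        C0 * ((mk : ℝ) / ((nk : ℝ) + (t : ℝ) * (d : ℝ) + 2)) ^ m) :
    ∀ (Q : Type) [Fintype Q] [PartialOrder Q], Fintype.card Q = n →
      ∃ χ : Finset Q → Fin k, ∀ i : Fin k,
        ¬ ∃ f : P i → Q, Function.Injective f ∧
            (∀ x y : P i, x ≤ y → f x ≤ f y) ∧
            ∀ C ∈ tChainSet Q t, (∀ q ∈ C, q ∈ Set.range f) → χ C = i := by
  intro Q _ _ hQ
  set last : Fin k := ⟨k - 1, by omega⟩
  set B : ℝ := mk / (nk + t * d + 2)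
  have hL : 0 ≤ log n := log_natCast_nonneg n
  have hB : 0 < B := hL.trans_lt h1
  have hx1 : log n / B ≤ 1 := (div_le_one hB).mpr h1.le
  have hK : (1 : ℝ) ≤ k - 1 := le_sub_iff_add_le.mpr (by exact_mod_cast hk)
  have hq0 : 0 ≤ log n / B / (k - 1) := div_nonneg (div_nonneg hL hB.le) (by linarith)
  have hq1 : log n / B / (k - 1) ≤ 1 := div_le_one_of_le₀ (hx1.trans hK) (by linarith)
  refine exists_coloring_of_copyBound_add_sum_lt_one P Q t (by simp; omega) last
    (div_nonneg hL hB.le) hx1 ?_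
  rw [Fintype.card_fin]
  have hbig : copyBound (P last) Q t (1 - log n / B) ≤ 1 / 4 := by
    rw [copyBound, hQ, ← hnk, ← hmk]
    exact choose_mul_choose_choose_mul_one_sub_pow_le hn (hnk ▸ hn3)
      (by rw [hmk, hnk]; exact ncard_tChainSet_le_choose) hd h1
  have hsmall : ∀ i ∈ univ.erase last, copyBound (P i) Q t (log n / B / (k - 1)) ≤
      n ^ Fintype.card (P ⟨k - 2, by omega⟩) / (Fintype.card (P ⟨0, by omega⟩))! * a *
        (log n / B / (k - 1)) ^ m := by
    intro i hi
    have hik : (i : ℕ) < k - 1 := by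
      have : (i : ℕ) ≠ k - 1 := fun h => ne_of_mem_erase hi (Fin.ext h)
      omega
    rw [copyBound, hQ]
    exact choose_mul_choose_choose_mul_pow_le hn (hmono ⟨0, by omega⟩ i (Nat.zero_le _))
      (hmono i ⟨k - 2, by omega⟩ (by simp only [Fin.le_def]; omega)) (hm.2 ⟨i, hik, rfl⟩)
      (ha.2 ⟨i, hik, rfl⟩) hq0 hq1
  have hrest := sum_le_card_nsmul _ _ _ hsmall
  rw [card_erase_of_mem (mem_univ _), card_univ, Fintype.card_fin, nsmul_eq_mul,
    Nat.cast_sub (by omega), Nat.cast_one] at hrest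
  have hkey := sub_one_mul_pow_div_factorial_mul_pow_lt hk hm1 hB (hC0 ▸ h2)
  linarith
end

section
/- Let k ≥ 1 and r ≥ 2 be integers. There exists a function χ from the subsets of [2k−1] to {1,…,k} such that there is no monochromatic induced copy of the r-diamond ◊_r: there do not exist r+2 pairwise distinct subsets X, Y_1,…,Y_r, Z of [2k−1], all with the same χ-value, such that X ⊆ Y_i ⊆ Z for every i and such that for all i ≠ j neither Y_i ⊆ Y_j nor Y_j ⊆ Y_i. (That is, R^♯_k(𝓑 | ◊_r) ≥ 2k.) -/
/-! Colour a set by `⌊|S| / 2⌋`, i.e. pair up consecutive layers of the Boolean lattice;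
`2k - 1` points give `2k` layers and hence `k` colours. Any copy of `◊_r` with `r ≥ 1` contains
a strict chain `X ⊂ Y ⊂ Z`, whose three distinct sizes cannot fit into one pair of layers. -/

namespace Finset

variable {α : Type*}

theorem card_div_two_lt_of_ssubset_of_ssubset {X Y Z : Finset α} (hXY : X ⊂ Y) (hYZ : Y ⊂ Z) :
    X.card / 2 < Z.card / 2 := by
  have := card_lt_card hXY
  have := card_lt_card hYZ
  omega

def layerPairColoring [Fintype α] {k : ℕ} (hk : Fintype.card α < 2 * k) (S : Finset α) : Fin k :=
  ⟨S.card / 2, Nat.div_lt_of_lt_mul ((card_le_univ S).trans_lt hk)⟩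

end Finset

theorem stmt11 (k r : ℕ) (hk : 1 ≤ k) (hr : 2 ≤ r) :
    ∃ χ : Finset (Fin (2 * k - 1)) → Fin k,
      ¬ ∃ (X Z : Finset (Fin (2 * k - 1))) (Y : Fin r → Finset (Fin (2 * k - 1))),
          Function.Injective Y ∧ (∀ i, X ≠ Y i) ∧ (∀ i, Y i ≠ Z) ∧ X ≠ Z ∧
          (∀ i, χ (Y i) = χ X) ∧ χ Z = χ X ∧
          (∀ i, X ⊆ Y i ∧ Y i ⊆ Z) ∧
          ∀ i j, i ≠ j → ¬ Y i ⊆ Y j := by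
  refine ⟨Finset.layerPairColoring (by rw [Fintype.card_fin]; omega), ?_⟩
  rintro ⟨X, Z, Y, -, hXY, hYZ, -, -, hZX, hsub, -⟩
  let i : Fin r := ⟨0, by omega⟩
  have hlt := Finset.card_div_two_lt_of_ssubset_of_ssubset
    ((hsub i).1.ssubset_of_ne (hXY i)) ((hsub i).2.ssubset_of_ne (hYZ i))
  exact hlt.ne (congrArg Fin.val hZX).symm
end
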